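/- arXiv:1005.3178 — 2 statements merged into one kernel-verified Lean document; each statement's English description precedes it below -/
import Mathlib

section
/- (i) For every morphism (π,f) : (A,j)_K → (B,i)_P of nets of C*-algebras there exists a morphism (π̄,f) : (Ā,j̄)_K → (B̄,ī)_P between the corresponding enveloping net bundles satisfying (π̄,f) ∘ ε = ε̃ ∘ (π,f), where ε and ε̃ are the canonical embeddings of (A,j)_K and (B,i)_P into their enveloping net bundles; moreover, if (π,f) is faithful on the fibres and (B,i)_P is injective, then (A,j)_K is injective. (ii) The assignment (A,j)_K ↦ (Ā,j̄)_K, (π,f) ↦ (π̄,f) is functorial: it preserves identities and compositions of morphisms. -/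
noncomputable section

universe u v w u' v' w' u'' v'' w''

namespace AQFT

/-! ### Simplices and paths in a poset -/

structure Simplex1 (K : Type u) [PartialOrder K] : Type u where
  supp : K
  d0 : K
  d1 : K
  le0 : d0 ≤ supp
  le1 : d1 ≤ supp

namespace Simplex1

variable {K : Type u} [PartialOrder K]

def op (s : Simplex1 K) : Simplex1 K := ⟨s.supp, s.d1, s.d0, s.le1, s.le0⟩

def deg (a : K) : Simplex1 K := ⟨a, a, a, le_rfl, le_rfl⟩

def map {L : Type u'} [PartialOrder L] (f : K →o L) (s : Simplex1 K) : Simplex1 L :=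
  ⟨f s.supp, f s.d0, f s.d1, f.monotone s.le0, f.monotone s.le1⟩

end Simplex1

structure Simplex2 (K : Type u) [PartialOrder K] : Type u where
  supp : K
  d0 : Simplex1 K
  d1 : Simplex1 K
  d2 : Simplex1 K
  le0 : d0.supp ≤ supp
  le1 : d1.supp ≤ supp
  le2 : d2.supp ≤ supp
  h00 : d0.d0 = d1.d0
  h11 : d1.d1 = d2.d1
  h10 : d0.d1 = d2.d0

inductive SPath (K : Type u) [PartialOrder K] : K → K → Type u
  | nil (a : K) : SPath K a a
  | cons {a b c : K} (p : SPath K a b) (s : Simplex1 K) (h1 : s.d1 = b) (h0 : s.d0 = c) :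
      SPath K a c

namespace SPath

variable {K : Type u} [PartialOrder K]

/-- The path consisting of a single 1-simplex. -/
def single {a b : K} (s : Simplex1 K) (h1 : s.d1 = a) (h0 : s.d0 = b) : SPath K a b :=
  .cons (.nil a) s h1 h0

/-- Composition of paths: first traverse `p`, then `q`. -/
def comp {a b : K} (p : SPath K a b) : {c : K} → SPath K b c → SPath K a c
  | _, .nil _ => p
  | _, .cons q s h1 h0 => .cons (p.comp q) s h1 h0

/-- The opposite (reverse) of a path. -/
def reverse {a : K} : {b : K} → SPath K a b → SPath K b a
  | _, .nil _ => .nil a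
  | _, .cons p s h1 h0 => (single s.op h0 h1).comp p.reverse

@[simp] theorem comp_nil {a b : K} (p : SPath K a b) : p.comp (.nil b) = p := rfl

@[simp] theorem nil_comp {a b : K} (p : SPath K a b) : (SPath.nil a).comp p = p := by
  induction p with
  | nil => rfl
  | cons p s h1 h0 ih =>
      show SPath.cons ((SPath.nil _).comp p) s h1 h0 = _
      rw [ih]

theorem comp_assoc {a b c d : K} (p : SPath K a b) (q : SPath K b c) (r : SPath K c d) :
    (p.comp q).comp r = p.comp (q.comp r) := by
  induction r with
  | nil => rfl
  | cons r s h1 h0 ih =>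
      show SPath.cons ((p.comp q).comp r) s h1 h0 = SPath.cons (p.comp (q.comp r)) s h1 h0
      rw [ih]

/-- All 1-simplices of the path have support `≤ o`. -/
def SuppLE (o : K) {a : K} : {b : K} → SPath K a b → Prop
  | _, .nil _ => True
  | _, .cons p s _ _ => SuppLE o p ∧ s.supp ≤ o

/-- All supports and faces of the path belong to `P`. -/
def MemAll (P : Set K) {a : K} : {b : K} → SPath K a b → Prop
  | _, .nil _ => True
  | _, .cons p s _ _ => MemAll P p ∧ s.supp ∈ P ∧ s.d0 ∈ P ∧ s.d1 ∈ P

theorem SuppLE.comp {o : K} {a b c : K} {p : SPath K a b} {q : SPath K b c}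
    (hp : SuppLE o p) (hq : SuppLE o q) : SuppLE o (p.comp q) := by
  induction q with
  | nil => exact hp
  | cons q s h1 h0 ih => exact ⟨ih hq.1, hq.2⟩

theorem SuppLE.reverse {o : K} {a b : K} {p : SPath K a b} (hp : SuppLE o p) :
    SuppLE o p.reverse := by
  induction p with
  | nil => trivial
  | cons p s h1 h0 ih => exact SuppLE.comp ⟨trivial, hp.2⟩ (ih hp.1)

/-- Mapping paths along a monotone map. -/
def map {L : Type u'} [PartialOrder L] (f : K →o L) {a : K} :
    {b : K} → SPath K a b → SPath L (f a) (f b)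
  | _, .nil _ => .nil (f a)
  | _, .cons p s h1 h0 => .cons (map f p) (s.map f) (congrArg f h1) (congrArg f h0)

/-- The path of the nerve 1-simplex associated with an inclusion `o ≤ a`. -/
def nervePath {o a : K} (h : o ≤ a) : SPath K o a :=
  single ⟨a, a, o, le_rfl, h⟩ rfl rfl

/-! ### Homotopy of paths -/

inductive Homotopic : {a b : K} → SPath K a b → SPath K a b → Prop
  | refl {a b : K} (p : SPath K a b) : Homotopic p p
  | symm {a b : K} {p q : SPath K a b} : Homotopic p q → Homotopic q p
  | trans {a b : K} {p q r : SPath K a b} : Homotopic p q → Homotopic q r → Homotopic p r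
  | comp_congr {a b c : K} {p p' : SPath K a b} {q q' : SPath K b c} :
      Homotopic p p' → Homotopic q q' → Homotopic (p.comp q) (p'.comp q')
  | degen {a : K} (s : Simplex1 K) (h0 : s.d0 = a) (h1 : s.d1 = a) (hs : s.supp = a) :
      Homotopic (SPath.nil a) (single s h1 h0)
  | triangle {a b : K} (c : Simplex2 K) (h1 : c.d2.d1 = a) (h0 : c.d0.d0 = b) :
      Homotopic ((single c.d2 h1 rfl).comp (single c.d0 c.h10 h0))
        (single c.d1 (c.h11.trans h1) (c.h00.symm.trans h0))

theorem single_comp_op {a b : K} (s : Simplex1 K) (h1 : s.d1 = a) (h0 : s.d0 = b) :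
    Homotopic ((single s h1 h0).comp (single s.op h0 h1)) (SPath.nil a) := by
  subst h1; subst h0
  have ht := Homotopic.triangle
    (⟨s.supp, s.op, Simplex1.deg s.d1, s, le_rfl, s.le1, le_rfl, rfl, rfl, rfl⟩ : Simplex2 K)
    rfl rfl
  have hd := Homotopic.degen (K := K) (Simplex1.deg s.d1) rfl rfl rfl
  exact ht.trans hd.symm

theorem comp_reverse_self {a b : K} (p : SPath K a b) :
    Homotopic (p.comp p.reverse) (SPath.nil a) := by
  induction p with
  | nil => exact .refl _
  | cons p s h1 h0 ih =>
      show Homotopic ((p.comp (single s h1 h0)).comp ((single s.op h0 h1).comp p.reverse)) _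
      rw [comp_assoc, ← comp_assoc (single s h1 h0)]
      have h2 : Homotopic (((single s h1 h0).comp (single s.op h0 h1)).comp p.reverse)
          p.reverse := by
        have h3 := Homotopic.comp_congr (single_comp_op s h1 h0) (Homotopic.refl p.reverse)
        rwa [nil_comp] at h3
      exact (Homotopic.comp_congr (Homotopic.refl p) h2).trans ih

theorem reverse_comp_self {a b : K} (p : SPath K a b) :
    Homotopic (p.reverse.comp p) (SPath.nil b) := by
  induction p with
  | nil => exact .refl _
  | cons p s h1 h0 ih =>
      show Homotopic (((single s.op h0 h1).comp p.reverse).comp (p.comp (single s h1 h0))) _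
      rw [comp_assoc, ← comp_assoc p.reverse]
      have h2 : Homotopic ((p.reverse.comp p).comp (single s h1 h0)) (single s h1 h0) := by
        have h3 := Homotopic.comp_congr ih (Homotopic.refl (single s h1 h0))
        rwa [nil_comp] at h3
      have h4 : Homotopic ((single s.op h0 h1).comp ((p.reverse.comp p).comp (single s h1 h0)))
          ((single s.op h0 h1).comp (single s h1 h0)) :=
        Homotopic.comp_congr (Homotopic.refl _) h2
      exact h4.trans (single_comp_op s.op h0 h1)

theorem Homotopic.reverse_congr {a b : K} {p q : SPath K a b} (h : Homotopic p q) :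
    Homotopic p.reverse q.reverse := by
  have e1 : Homotopic p.reverse (p.reverse.comp (q.comp q.reverse)) :=
    Homotopic.comp_congr (Homotopic.refl p.reverse) (comp_reverse_self q).symm
  have e2 : Homotopic (p.reverse.comp (q.comp q.reverse)) ((p.reverse.comp p).comp q.reverse) := by
    rw [comp_assoc]
    exact Homotopic.comp_congr (Homotopic.refl _)
      (Homotopic.comp_congr h.symm (Homotopic.refl _))
  have e3 : Homotopic ((p.reverse.comp p).comp q.reverse) q.reverse := by
    have h3 := Homotopic.comp_congr (reverse_comp_self p) (Homotopic.refl q.reverse)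
    rwa [nil_comp] at h3
  exact (e1.trans e2).trans e3

end SPath

/-! ### The fundamental group of a poset -/

instance homotopySetoid (K : Type u) [PartialOrder K] (o : K) : Setoid (SPath K o o) where
  r := SPath.Homotopic
  iseqv := ⟨fun p => .refl p, fun h => h.symm, fun h h' => h.trans h'⟩

def Pi1 (K : Type u) [PartialOrder K] (o : K) : Type u := Quotient (homotopySetoid K o)

namespace Pi1

variable {K : Type u} [PartialOrder K] {o : K}

def mk (p : SPath K o o) : Pi1 K o := Quotient.mk _ p

instance : One (Pi1 K o) := ⟨mk (SPath.nil o)⟩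

instance : Mul (Pi1 K o) :=
  ⟨Quotient.map₂ (fun p q => q.comp p)
    (fun _ _ hp _ _ hq => SPath.Homotopic.comp_congr hq hp)⟩

instance : Inv (Pi1 K o) :=
  ⟨Quotient.map SPath.reverse (fun _ _ h => h.reverse_congr)⟩

instance : Group (Pi1 K o) where
  mul_assoc x y z := by
    refine Quotient.inductionOn₃ x y z ?_
    intro p q r
    show mk (r.comp (q.comp p)) = mk ((r.comp q).comp p)
    rw [SPath.comp_assoc]
  one_mul x := Quotient.inductionOn x fun p => rfl
  mul_one x := Quotient.inductionOn x fun p => congrArg mk (SPath.nil_comp p)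
  inv_mul_cancel x := Quotient.inductionOn x fun p => Quotient.sound (SPath.comp_reverse_self p)

end Pi1

/-! ### Nets of C*-algebras over a poset -/

open scoped ComplexOrder

variable {K : Type u} [PartialOrder K]

structure CStarNet (K : Type u) [PartialOrder K] where
  fib : K → Type v
  [cstar : ∀ o, CStarAlgebra (fib o)]
  incl : ∀ ⦃a o : K⦄, a ≤ o → (fib a →⋆ₐ[ℂ] fib o)
  incl_injective : ∀ ⦃a o : K⦄ (h : a ≤ o), Function.Injective (incl h)
  incl_comp : ∀ ⦃e a o : K⦄ (h1 : e ≤ a) (h2 : a ≤ o) (x : fib e),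
      incl h2 (incl h1 x) = incl (h1.trans h2) x

attribute [instance] CStarNet.cstar

/-- A C*-net bundle: all the inclusion maps are isomorphisms. -/
def IsCStarNetBundle (N : CStarNet.{u, v} K) : Prop :=
  ∀ ⦃a o : K⦄ (h : a ≤ o), Function.Bijective (N.incl h)

/-- Morphisms of nets over (possibly) different posets, over the poset map `f`. -/
def IsNetMorphism {K : Type u} {S : Type u'} [PartialOrder K] [PartialOrder S]
    (N : CStarNet.{u, v} K) (M : CStarNet.{u', v'} S) (f : K →o S)
    (φ : ∀ o : K, N.fib o →⋆ₐ[ℂ] M.fib (f o)) : Prop :=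
  ∀ ⦃a o : K⦄ (h : a ≤ o) (x : N.fib a), φ o (N.incl h x) = M.incl (f.monotone h) (φ a x)

/-- Morphisms of nets over the same poset (over the identity of the poset). -/
def IsNetMorphismOver (N : CStarNet.{u, v} K) (M : CStarNet.{u, v'} K)
    (φ : ∀ o : K, N.fib o →⋆ₐ[ℂ] M.fib o) : Prop :=
  ∀ ⦃a o : K⦄ (h : a ≤ o) (x : N.fib a), φ o (N.incl h x) = M.incl h (φ a x)

namespace CStarNet

def fibCast (N : CStarNet.{u, v} K) {a b : K} (h : a = b) : N.fib a ≃⋆ₐ[ℂ] N.fib b := by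
  subst h; exact StarAlgEquiv.refl ℂ _

/-- The isomorphism determined by an inclusion map of a C*-net bundle. -/
def holEquiv (N : CStarNet.{u, v} K) (hN : IsCStarNetBundle N) ⦃a o : K⦄ (h : a ≤ o) :
    N.fib a ≃⋆ₐ[ℂ] N.fib o :=
  StarAlgEquiv.ofBijective (N.incl h) (hN h)

/-- The 1-cocycle `j_b` associated with a 1-simplex `b` of the poset. -/
def hol1 (N : CStarNet.{u, v} K) (hN : IsCStarNetBundle N) (s : Simplex1 K) :
    N.fib s.d1 ≃⋆ₐ[ℂ] N.fib s.d0 :=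
  (N.holEquiv hN s.le1).trans (N.holEquiv hN s.le0).symm

/-- The extension `j_p` of the 1-cocycle from 1-simplices to paths. -/
def holPath (N : CStarNet.{u, v} K) (hN : IsCStarNetBundle N) {a : K} :
    {b : K} → SPath K a b → (N.fib a ≃⋆ₐ[ℂ] N.fib b)
  | _, .nil _ => StarAlgEquiv.refl ℂ _
  | _, .cons p s h1 h0 =>
      (holPath N hN p).trans (((N.fibCast h1.symm).trans (N.hol1 hN s)).trans (N.fibCast h0))

end CStarNet

/-- A net is trivial if it is isomorphic to a constant net bundle. -/
def IsTrivialNet (N : CStarNet.{u, v} K) : Prop :=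
  ∀ o₀ : K, ∃ τ : ∀ a, N.fib a ≃⋆ₐ[ℂ] N.fib o₀,
    ∀ ⦃a o : K⦄ (h : a ≤ o) (x : N.fib a), τ o (N.incl h x) = τ a x

/-- `(NB, ε)` is an enveloping net bundle of the net `N`. -/
def IsEnvelope (N : CStarNet.{u, v} K) (NB : CStarNet.{u, max u v} K)
    (ε : ∀ o, N.fib o →⋆ₐ[ℂ] NB.fib o) : Prop :=
  IsCStarNetBundle NB ∧ IsNetMorphismOver N NB ε ∧
    ∀ (M : CStarNet.{u, max u v} K), IsCStarNetBundle M →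
      ∀ ψ : ∀ o, N.fib o →⋆ₐ[ℂ] M.fib o, IsNetMorphismOver N M ψ →
        ∃! ψu : ∀ o, NB.fib o →⋆ₐ[ℂ] M.fib o,
          IsNetMorphismOver NB M ψu ∧ ∀ o x, ψu o (ε o x) = ψ o x

/-- The net `N` is nondegenerate w.r.t. the enveloping net bundle `NB`. -/
def IsNondegenerate (NB : CStarNet.{u, v'} K) : Prop :=
  ∀ o : K, Nontrivial (NB.fib o)

/-! ### States -/

/-- A state on a unital C*-algebra. -/
structure CStarAlgState (A : Type v) [CStarAlgebra A] where
  lin : A →ₗ[ℂ] ℂ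
  map_one : lin 1 = 1
  pos : ∀ a : A, 0 ≤ lin (star a * a)

/-- A state on a net of C*-algebras. -/
structure NetState (N : CStarNet.{u, v} K) where
  st : ∀ o, CStarAlgState (N.fib o)
  compat : ∀ ⦃o a : K⦄ (h : o ≤ a) (x : N.fib o), (st a).lin (N.incl h x) = (st o).lin x

/-! ### Representations -/

structure NetRep (N : CStarNet.{u, v} K) where
  H : K → Type w
  [nacg : ∀ o, NormedAddCommGroup (H o)]
  [ips : ∀ o, InnerProductSpace ℂ (H o)]
  [cpl : ∀ o, CompleteSpace (H o)]
  rep : ∀ o, N.fib o →⋆ₐ[ℂ] (H o →L[ℂ] H o)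
  U : ∀ ⦃o a : K⦄, o ≤ a → (H o ≃ₗᵢ[ℂ] H a)
  intertwine : ∀ ⦃o a : K⦄ (h : o ≤ a) (x : N.fib o) (v : H o),
      U h (rep o x v) = rep a (N.incl h x) (U h v)
  U_comp : ∀ ⦃o a e : K⦄ (h1 : o ≤ a) (h2 : a ≤ e) (v : H o),
      U h2 (U h1 v) = U (h1.trans h2) v

attribute [instance] NetRep.nacg NetRep.ips NetRep.cpl

namespace NetRep

variable {N : CStarNet.{u, v} K}

def hCast (R : NetRep.{u, v, w} N) {a b : K} (h : a = b) : R.H a ≃ₗᵢ[ℂ] R.H b := by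
  subst h; exact LinearIsometryEquiv.refl ℂ _

/-- The unitary `U_b` associated with a 1-simplex `b`. -/
def U1 (R : NetRep.{u, v, w} N) (s : Simplex1 K) : R.H s.d1 ≃ₗᵢ[ℂ] R.H s.d0 :=
  (R.U s.le1).trans (R.U s.le0).symm

/-- The unitary `U_p` associated with a path `p`. -/
def Upath (R : NetRep.{u, v, w} N) {a : K} : {b : K} → SPath K a b → (R.H a ≃ₗᵢ[ℂ] R.H b)
  | _, .nil _ => LinearIsometryEquiv.refl ℂ _
  | _, .cons p s h1 h0 =>
      (Upath R p).trans (((R.hCast h1.symm).trans (R.U1 s)).trans (R.hCast h0))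

/-- A representation is faithful if all the `π_o` are injective. -/
def Faithful (R : NetRep.{u, v, w} N) : Prop := ∀ o, Function.Injective (R.rep o)

/-- A representation vanishes if all the `π_o` are zero. -/
def Vanishes (R : NetRep.{u, v, w} N) : Prop := ∀ (o) (x : N.fib o), R.rep o x = 0

/-- Quasi (topologically) trivial representation: the loop unitaries commute with the
representation of the corresponding fibre. -/
def QuasiTrivial (R : NetRep.{u, v, w} N) : Prop :=
  ∀ (o : K) (p : SPath K o o) (x : N.fib o) (v : R.H o),
    R.Upath p (R.rep o x v) = R.rep o x (R.Upath p v)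

/-- Unitary equivalence of representations. -/
def Equiv (R : NetRep.{u, v, w} N) (R' : NetRep.{u, v, w'} N) : Prop :=
  ∃ T : ∀ o, R.H o ≃ₗᵢ[ℂ] R'.H o,
    (∀ (o) (x : N.fib o) (v : R.H o), T o (R.rep o x v) = R'.rep o x (T o v)) ∧
    (∀ ⦃o a : K⦄ (h : o ≤ a) (v : R.H o), T a (R.U h v) = R'.U h (T o v))

end NetRep

/-- The representation of `N` obtained by composing a representation of `NB` with
a morphism `ε : N → NB` of nets over `K`. -/
def NetRep.ofEnvelope {N : CStarNet.{u, v} K} {NB : CStarNet.{u, v'} K}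
    (ε : ∀ o, N.fib o →⋆ₐ[ℂ] NB.fib o) (hε : IsNetMorphismOver N NB ε)
    (R : NetRep.{u, v', w} NB) : NetRep.{u, v, w} N where
  H := R.H
  rep o := (R.rep o).comp (ε o)
  U := R.U
  intertwine := by
    intro o a h x v
    show R.U h (R.rep o (ε o x) v) = R.rep a (ε a (N.incl h x)) (R.U h v)
    rw [hε h x]
    exact R.intertwine h (ε o x) v
  U_comp := R.U_comp

/-- Covariant representations of the holonomy dynamical system of a C*-net bundle,
with the action of the fundamental group presented at the level of loops. -/
structure CovRep (N : CStarNet.{u, v} K) (hN : IsCStarNetBundle N) (o : K) where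
  H : Type w
  [nacg : NormedAddCommGroup H]
  [ips : InnerProductSpace ℂ H]
  [cpl : CompleteSpace H]
  eta : N.fib o →⋆ₐ[ℂ] (H →L[ℂ] H)
  V : SPath K o o → (H ≃ₗᵢ[ℂ] H)
  V_hom : ∀ p q : SPath K o o, SPath.Homotopic p q → V p = V q
  V_mul : ∀ p q : SPath K o o, V (p.comp q) = (V p).trans (V q)
  cov : ∀ (p : SPath K o o) (x : N.fib o) (v : H),
      eta (N.holPath hN p x) (V p v) = V p (eta x v)

attribute [instance] CovRep.nacg CovRep.ips CovRep.cpl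

/-- Equivalence of covariant representations. -/
def CovRep.Equiv {N : CStarNet.{u, v} K} {hN : IsCStarNetBundle N} {o : K}
    (C : CovRep.{u, v, w} N hN o) (C' : CovRep.{u, v, w'} N hN o) : Prop :=
  ∃ W : C.H ≃ₗᵢ[ℂ] C'.H,
    (∀ (x : N.fib o) (v : C.H), W (C.eta x v) = C'.eta x (W v)) ∧
    (∀ (p : SPath K o o) (v : C.H), W (C.V p v) = C'.V p (W v))

/-- A representation of a single C*-algebra on a Hilbert space. -/
structure AlgRep (A : Type v) [CStarAlgebra A] where
  H : Type w
  [nacg : NormedAddCommGroup H]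
  [ips : InnerProductSpace ℂ H]
  [cpl : CompleteSpace H]
  rho : A →⋆ₐ[ℂ] (H →L[ℂ] H)

attribute [instance] AlgRep.nacg AlgRep.ips AlgRep.cpl

/-- A Hilbert space representation (on a single Hilbert space) of the restriction of
a net of C*-algebras to a subset `P` of the poset. -/
structure SubNetHSRep (N : CStarNet.{u, v} K) (P : Set K) where
  H : Type w
  [nacg : NormedAddCommGroup H]
  [ips : InnerProductSpace ℂ H]
  [cpl : CompleteSpace H]
  rep : ∀ o ∈ P, N.fib o →⋆ₐ[ℂ] (H →L[ℂ] H)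
  compat : ∀ ⦃a o : K⦄ (ha : a ∈ P) (ho : o ∈ P) (h : a ≤ o) (x : N.fib a),
      rep o ho (N.incl h x) = rep a ha x

attribute [instance] SubNetHSRep.nacg SubNetHSRep.ips SubNetHSRep.cpl

/-! ### Amenability -/

/-- The space `ℓ∞(G)` of bounded real-valued functions on `G`. -/
def BddFuns (G : Type w) : Submodule ℝ (G → ℝ) where
  carrier := {f | ∃ C, ∀ g, |f g| ≤ C}
  add_mem' := by
    rintro f g ⟨C, hC⟩ ⟨D, hD⟩
    exact ⟨C + D, fun x => (abs_add_le _ _).trans (add_le_add (hC x) (hD x))⟩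
  zero_mem' := ⟨0, by simp⟩
  smul_mem' := by
    rintro c f ⟨C, hC⟩
    refine ⟨|c| * C, fun x => ?_⟩
    have : |c • f x| = |c| * |f x| := by simp [abs_mul]
    calc |(c • f) x| = |c| * |f x| := by simpa using this
      _ ≤ |c| * C := mul_le_mul_of_nonneg_left (hC x) (abs_nonneg c)

def BddFuns.const (G : Type w) (r : ℝ) : BddFuns G :=
  ⟨fun _ => r, ⟨|r|, fun _ => le_rfl⟩⟩

def BddFuns.rtrans {G : Type w} [Group G] (f : BddFuns G) (h : G) : BddFuns G :=
  ⟨fun g => (f : G → ℝ) (g * h), by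
    obtain ⟨C, hC⟩ := f.2
    exact ⟨C, fun g => hC (g * h)⟩⟩

/-- A right invariant mean on `ℓ∞(G)`. -/
structure RightInvariantMean (G : Type w) [Group G] where
  mean : BddFuns G →ₗ[ℝ] ℝ
  nonneg : ∀ f : BddFuns G, (∀ g, 0 ≤ (f : G → ℝ) g) → 0 ≤ mean f
  normalized : mean (BddFuns.const G 1) = 1
  rightInv : ∀ (f : BddFuns G) (h : G), mean (BddFuns.rtrans f h) = mean f

/-- Amenability of a (discrete) group. -/
def IsAmenable (G : Type w) [Group G] : Prop := Nonempty (RightInvariantMean G)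

/-! ### Covariant nets -/

/-- A `G`-covariant structure on a net of C*-algebras, where `G` acts on the poset `K`
by order preserving bijections. -/
structure CovariantNet {G : Type w} [Group G] [MulAction G K]
    (hord : ∀ (g : G) (a b : K), a ≤ b → g • a ≤ g • b) (N : CStarNet.{u, v} K) where
  act : ∀ (g : G) (o : K), N.fib o ≃⋆ₐ[ℂ] N.fib (g • o)
  act_mul : ∀ (g h : G) (o : K) (x : N.fib o),
      N.fibCast (mul_smul h g o) (act (h * g) o x) = act h (g • o) (act g o x)
  act_incl : ∀ (g : G) ⦃a o : K⦄ (hao : a ≤ o) (x : N.fib a),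
      act g o (N.incl hao x) = N.incl (hord g a o hao) (act g a x)

/-- A `G`-invariant state of a `G`-covariant net. -/
def NetState.Invariant {G : Type w} [Group G] [MulAction G K]
    {hord : ∀ (g : G) (a b : K), a ≤ b → g • a ≤ g • b} {N : CStarNet.{u, v} K}
    (α : CovariantNet hord N) (ω : NetState N) : Prop :=
  ∀ (g : G) (o : K) (x : N.fib o), (ω.st (g • o)).lin (α.act g o x) = (ω.st o).lin x

/-! ### The generalized Čech cocycle -/

/-- A 1-simplex of the simplicial set `Σ°_*(K)`: two vertices and a nonempty support
`F` lying below both of them. -/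
structure CechSimplex1 (K : Type u) [PartialOrder K] : Type u where
  F : Set K
  hne : F.Nonempty
  src : K
  tgt : K
  hsrc : ∀ a ∈ F, a ≤ src
  htgt : ∀ a ∈ F, a ≤ tgt

def CechSimplex1.swap (s : CechSimplex1 K) : CechSimplex1 K :=
  ⟨s.F, s.hne, s.tgt, s.src, s.htgt, s.hsrc⟩

/-- `A^F_o`: the C*-subalgebra of the fibre over `o` generated by the images of the
fibres over the elements of `F`. -/
def CStarNet.fibGen (N : CStarNet.{u, v} K) (F : Set K) (o : K) (hF : ∀ a ∈ F, a ≤ o) :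
    StarSubalgebra ℂ (N.fib o) :=
  (StarAlgebra.adjoin ℂ (⋃ a, ⋃ h : a ∈ F, Set.range (N.incl (hF a h)))).topologicalClosure

theorem CStarNet.mem_fibGen (N : CStarNet.{u, v} K) {F : Set K} {o : K}
    (hF : ∀ a ∈ F, a ≤ o) {a : K} (ha : a ∈ F) (x : N.fib a) :
    N.incl (hF a ha) x ∈ N.fibGen F o hF :=
  StarSubalgebra.le_topologicalClosure _
    (StarAlgebra.subset_adjoin ℂ _
      (Set.mem_iUnion.2 ⟨a, Set.mem_iUnion.2 ⟨ha, Set.mem_range_self x⟩⟩))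

/-- A generalized Čech cocycle of the net `N` defined over the collection `D` of
1-simplices of `Σ°_*(K)`. -/
structure CechCocycle (N : CStarNet.{u, v} K) (D : Set (CechSimplex1 K)) where
  zeta : ∀ s ∈ D, (N.fibGen s.F s.src s.hsrc ≃⋆ₐ[ℂ] N.fibGen s.F s.tgt s.htgt)
  compat : ∀ (s : CechSimplex1 K) (hs : s ∈ D) ⦃a : K⦄ (ha : a ∈ s.F) (x : N.fib a),
      (zeta s hs ⟨N.incl (s.hsrc a ha) x, N.mem_fibGen s.hsrc ha x⟩ : N.fib s.tgt)
        = N.incl (s.htgt a ha) x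

/-- The domain of the Čech cocycle of a net: the union of all the domains over which
a Čech cocycle of the net exists. -/
def CechDomain (N : CStarNet.{u, v} K) : Set (CechSimplex1 K) :=
  {s | ∃ D : Set (CechSimplex1 K), Nonempty (CechCocycle N D) ∧ s ∈ D}


/-- A representation of a C*-net bundle and a covariant representation of its holonomy
dynamical system correspond to each other. -/
def MatchesCov {N : CStarNet.{u, v} K} {hN : IsCStarNetBundle N} {o : K}
    (R : NetRep.{u, v, w} N) (C : CovRep.{u, v, w'} N hN o) : Prop :=
  ∃ W : R.H o ≃ₗᵢ[ℂ] C.H,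
    (∀ (x : N.fib o) (v : R.H o), W (R.rep o x v) = C.eta x (W v)) ∧
    (∀ (p : SPath K o o) (v : R.H o), W (R.Upath p v) = C.V p (W v))

end AQFT

/-!
The universal property of the enveloping net bundle `NB` only tests C*-net bundles whose fibres
live in the universe of `NB`, while the enveloping bundle of the target net lives elsewhere. A
morphism `ψ` from `N` into an arbitrary bundle `Q` still lifts to `NB`: the closed
*-subalgebras of the fibres of `Q` generated by the parallel transports of the images of `ψ`
form a sub-bundle of `Q` of the right size, to which the universal property applies after
shrinking. Lifting `ε̃ ∘ π` into the pullback of `B̄` along `f` gives `π̄`; uniqueness in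
the universal property gives preservation of identities, and compatibility with composition
is a direct computation.
-/

open scoped CStarAlgebra

theorem small_closure {X : Type*} [TopologicalSpace X] [FrechetUrysohnSpace X]
    [T2Space X] (s : Set X) [Small.{w} s] : Small.{w} (closure s) := by
  cases isEmpty_or_nonempty X
  · have : Subsingleton (closure s) := ⟨fun x => isEmptyElim x.1⟩
    exact small_subsingleton _
  have hsub : closure s ⊆ Set.range fun u : ℕ → s => Filter.limUnder .atTop fun n => (u n : X) := by
    intro y hy
    obtain ⟨u, hus, hlim⟩ := mem_closure_iff_seq_limit.mp hy
    exact ⟨fun n => ⟨u n, hus n⟩, hlim.limUnder_eq⟩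
  exact small_subset hsub

theorem Submonoid.small_closure {M : Type*} [Monoid M] (s : Set M) [Small.{w} s] :
    Small.{w} (Submonoid.closure s) := by
  have hsub : (Submonoid.closure s : Set M) ⊆ Set.range fun l : List s => (l.map (↑)).prod := by
    intro x hx
    obtain ⟨l, hl, rfl⟩ := Submonoid.exists_list_of_mem_closure hx
    exact ⟨l.attach.map fun y => ⟨y.1, hl y.1 y.2⟩, by simp⟩
  exact small_subset hsub

theorem StarAlgebra.small_adjoin {A : Type*} [Ring A] [StarRing A] [Algebra ℂ A] [StarModule ℂ A]
    (s : Set A) [Small.{w} s] : Small.{w} (StarAlgebra.adjoin ℂ s) := by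
  have : Small.{w} (star s : Set A) := by rw [← Set.image_star]; infer_instance
  have : Small.{w} (Submonoid.closure (s ∪ star s)) := Submonoid.small_closure _
  have : Small.{w} (Subalgebra.toSubmodule (Algebra.adjoin ℂ (s ∪ star s))) := by
    rw [Algebra.adjoin_eq_span]
    exact Submodule.small_span _
  rwa [← StarAlgebra.adjoin_toSubalgebra] at this

namespace Shrink

variable {A : Type*} [CStarAlgebra A] [Small.{w} A]

instance : StarRing (Shrink.{w} A) := (equivShrink A).symm.starRing

instance : StarModule ℂ (Shrink.{w} A) := (equivShrink A).symm.starModule ℂ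

def starAlgEquiv : Shrink.{w} A ≃⋆ₐ[ℂ] A :=
  { Shrink.algEquiv ℂ A with
    map_smul' := map_smul (Shrink.algEquiv ℂ A)
    map_star' := fun _ => (equivShrink A).symm_apply_apply _ }

instance : NormedRing (Shrink.{w} A) :=
  NormedRing.induced _ _ (starAlgEquiv (A := A)) (starAlgEquiv (A := A)).injective

theorem norm_def (x : Shrink.{w} A) : ‖x‖ = ‖starAlgEquiv x‖ := rfl

instance : NormedAlgebra ℂ (Shrink.{w} A) where
  norm_smul_le c x := by simpa only [norm_def, map_smul] using norm_smul_le c (starAlgEquiv x)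

instance : CStarRing (Shrink.{w} A) where
  norm_mul_self_le x := by
    simpa only [norm_def, map_mul, map_star] using
      (CStarRing.norm_star_mul_self (x := starAlgEquiv x)).ge

theorem isometry_starAlgEquiv : Isometry (starAlgEquiv : Shrink.{w} A ≃⋆ₐ[ℂ] A) :=
  AddMonoidHomClass.isometry_of_norm (starAlgEquiv : Shrink.{w} A ≃⋆ₐ[ℂ] A) fun _ => rfl

instance : CompleteSpace (Shrink.{w} A) :=
  (IsometryEquiv.mk starAlgEquiv.toEquiv isometry_starAlgEquiv).completeSpace

instance : CStarAlgebra (Shrink.{w} A) where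

end Shrink

theorem StarSubalgebra.map_topologicalClosure_adjoin_le {A B : Type*} [CStarAlgebra A]
    [CStarAlgebra B] (φ : A →⋆ₐ[ℂ] B) {s : Set A} {t : Set B} (hst : φ '' s ⊆ t) :
    (StarAlgebra.adjoin ℂ s).topologicalClosure.map φ
      ≤ (StarAlgebra.adjoin ℂ t).topologicalClosure :=
  (map_topologicalClosure_le _ φ (map_continuous φ)).trans <|
    topologicalClosure_mono (by rw [StarAlgHom.map_adjoin]; exact StarAlgebra.adjoin_mono hst)

namespace AQFT

variable {K : Type u} [PartialOrder K]

theorem IsNetMorphismOver.comp {N₁ : CStarNet.{u, v} K} {N₂ : CStarNet.{u, v'} K}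
    {N₃ : CStarNet.{u, w} K} {φ : ∀ o, N₁.fib o →⋆ₐ[ℂ] N₂.fib o}
    {ψ : ∀ o, N₂.fib o →⋆ₐ[ℂ] N₃.fib o} (hψ : IsNetMorphismOver N₂ N₃ ψ)
    (hφ : IsNetMorphismOver N₁ N₂ φ) : IsNetMorphismOver N₁ N₃ fun o => (ψ o).comp (φ o) :=
  fun _ _ h x => by simp only [StarAlgHom.comp_apply, hφ h x, hψ h]

theorem IsNetMorphism.comp {P : Type u'} {S : Type u''} [PartialOrder P] [PartialOrder S]
    {N₁ : CStarNet.{u, v} K} {N₂ : CStarNet.{u', v'} P} {N₃ : CStarNet.{u'', w} S}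
    {f : K →o P} {g : P →o S} {φ : ∀ o, N₁.fib o →⋆ₐ[ℂ] N₂.fib (f o)}
    {ψ : ∀ o, N₂.fib o →⋆ₐ[ℂ] N₃.fib (g o)} (hψ : IsNetMorphism N₂ N₃ g ψ)
    (hφ : IsNetMorphism N₁ N₂ f φ) :
    IsNetMorphism N₁ N₃ (g.comp f) fun o => (ψ (f o)).comp (φ o) :=
  fun _ o h x => by
    show ψ (f o) (φ o (N₁.incl h x)) = _
    rw [hφ h x, hψ (f.monotone h)]
    rfl

namespace CStarNet

@[simp] theorem incl_refl (N : CStarNet.{u, v} K) {o : K} (x : N.fib o) : N.incl le_rfl x = x :=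
  N.incl_injective le_rfl (N.incl_comp le_rfl le_rfl x)

def comap {P : Type u'} [PartialOrder P] (M : CStarNet.{u', v'} P) (f : K →o P) :
    CStarNet.{u, v'} K where
  fib o := M.fib (f o)
  incl _ _ h := M.incl (f.monotone h)
  incl_injective _ _ h := M.incl_injective (f.monotone h)
  incl_comp _ _ _ h₁ h₂ := M.incl_comp (f.monotone h₁) (f.monotone h₂)

theorem isCStarNetBundle_comap {P : Type u'} [PartialOrder P] {M : CStarNet.{u', v'} P}
    (hM : IsCStarNetBundle M) (f : K →o P) : IsCStarNetBundle (M.comap f) :=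
  fun _ _ h => hM (f.monotone h)

section Restrict

variable (Q : CStarNet.{u, w} K) (B : ∀ o, StarSubalgebra ℂ (Q.fib o))
  [∀ o, IsClosed (B o : Set (Q.fib o))]
  (hB : ∀ ⦃a o : K⦄ (h : a ≤ o), ∀ x ∈ B a, Q.incl h x ∈ B o)

def restrict : CStarNet.{u, w} K where
  fib o := B o
  incl _ _ h := ((Q.incl h).comp (B _).subtype).codRestrict (B _) fun x => hB h x x.2
  incl_injective _ _ h _ _ hxy := Subtype.ext (Q.incl_injective h (congrArg Subtype.val hxy))
  incl_comp _ _ _ h₁ h₂ x := Subtype.ext (Q.incl_comp h₁ h₂ x)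

theorem isNetMorphismOver_restrict_subtype :
    IsNetMorphismOver (Q.restrict B hB) Q fun o => (B o).subtype :=
  fun _ _ _ _ => rfl

theorem isNetMorphismOver_restrict_codRestrict {N : CStarNet.{u, v} K}
    {ψ : ∀ o, N.fib o →⋆ₐ[ℂ] Q.fib o} (hψ : IsNetMorphismOver N Q ψ) (hψB : ∀ o x, ψ o x ∈ B o) :
    IsNetMorphismOver N (Q.restrict B hB) fun o => (ψ o).codRestrict (B o) (hψB o) :=
  fun _ _ h x => Subtype.ext (hψ h x)

theorem isCStarNetBundle_restrict (hQ : IsCStarNetBundle Q)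
    (hB' : ∀ ⦃a o : K⦄ (h : a ≤ o), ∀ y ∈ B o, (Q.holEquiv hQ h).symm y ∈ B a) :
    IsCStarNetBundle (Q.restrict B hB) :=
  fun _ _ h => ⟨(Q.restrict B hB).incl_injective h, fun y : B _ =>
    ⟨⟨_, hB' h y y.2⟩, Subtype.ext ((Q.holEquiv hQ h).apply_symm_apply y)⟩⟩

end Restrict

section Transfer

variable (Q : CStarNet.{u, w'} K) (F : K → Type w) [∀ o, CStarAlgebra (F o)]
  (e : ∀ o, F o ≃⋆ₐ[ℂ] Q.fib o)

def transfer : CStarNet.{u, w} K where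
  fib := F
  incl _ _ h := (e _).symm.toStarAlgHom.comp ((Q.incl h).comp (e _).toStarAlgHom)
  incl_injective _ _ h := (e _).symm.injective.comp ((Q.incl_injective h).comp (e _).injective)
  incl_comp _ _ _ h₁ h₂ x := by simp [Q.incl_comp]

theorem isNetMorphismOver_transfer :
    IsNetMorphismOver (Q.transfer F e) Q fun o => (e o).toStarAlgHom :=
  fun _ _ _ _ => (e _).apply_symm_apply _

theorem isNetMorphismOver_transfer_symm :
    IsNetMorphismOver Q (Q.transfer F e) fun o => (e o).symm.toStarAlgHom :=
  fun _ _ _ x => by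
    show _ = (e _).symm (Q.incl _ (e _ ((e _).symm x)))
    rw [StarAlgEquiv.apply_symm_apply]
    rfl

theorem isCStarNetBundle_transfer (hQ : IsCStarNetBundle Q) :
    IsCStarNetBundle (Q.transfer F e) :=
  fun _ _ h => (e _).symm.bijective.comp ((hQ h).comp (e _).bijective)

end Transfer

section Generated

variable (Q : CStarNet.{u, w} K) (hQ : IsCStarNetBundle Q)

theorem holPath_cons_incl {a' a o : K} (p : SPath K a' a) (h : a ≤ o) (x : Q.fib a') :
    Q.holPath hQ (p.cons ⟨o, o, a, le_rfl, h⟩ rfl rfl) x = Q.incl h (Q.holPath hQ p x) :=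
  (Q.holEquiv hQ le_rfl).symm_apply_eq.mpr (Q.incl_refl _).symm

theorem holPath_cons_incl_inv {a' a o : K} (p : SPath K a' o) (h : a ≤ o) (x : Q.fib a') :
    Q.holPath hQ (p.cons ⟨o, a, o, h, le_rfl⟩ rfl rfl) x
      = (Q.holEquiv hQ h).symm (Q.holPath hQ p x) :=
  congrArg (Q.holEquiv hQ h).symm (Q.incl_refl _)

variable {N : CStarNet.{u, v} K} (ψ : ∀ o, N.fib o →⋆ₐ[ℂ] Q.fib o)

def transportRange (o : K) : Set (Q.fib o) :=
  Set.range fun t : Σ a, SPath K a o × N.fib a => Q.holPath hQ t.2.1 (ψ t.1 t.2.2)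

def generatedFib (o : K) : StarSubalgebra ℂ (Q.fib o) :=
  (StarAlgebra.adjoin ℂ (Q.transportRange hQ ψ o)).topologicalClosure

instance (o : K) : IsClosed (Q.generatedFib hQ ψ o : Set (Q.fib o)) :=
  StarSubalgebra.isClosed_topologicalClosure _

instance (o : K) : Small.{max u v} (Q.transportRange hQ ψ o) := small_range _

instance (o : K) : Small.{max u v} (Q.generatedFib hQ ψ o) := by
  have := StarAlgebra.small_adjoin.{max u v} (Q.transportRange hQ ψ o)
  exact small_closure ((StarAlgebra.adjoin ℂ (Q.transportRange hQ ψ o) : Set (Q.fib o)))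

theorem apply_mem_generatedFib (o : K) (x : N.fib o) : ψ o x ∈ Q.generatedFib hQ ψ o :=
  StarSubalgebra.le_topologicalClosure _ <|
    StarAlgebra.subset_adjoin ℂ _ ⟨⟨o, .nil o, x⟩, rfl⟩

theorem generatedFib_map_le {a o : K} (φ : Q.fib a →⋆ₐ[ℂ] Q.fib o)
    (hφ : φ '' Q.transportRange hQ ψ a ⊆ Q.transportRange hQ ψ o) :
    (Q.generatedFib hQ ψ a).map φ ≤ Q.generatedFib hQ ψ o :=
  StarSubalgebra.map_topologicalClosure_adjoin_le φ hφ

theorem incl_mem_generatedFib {a o : K} (h : a ≤ o) {x : Q.fib a}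
    (hx : x ∈ Q.generatedFib hQ ψ a) : Q.incl h x ∈ Q.generatedFib hQ ψ o := by
  refine Q.generatedFib_map_le hQ ψ (Q.incl h) ?_ ⟨x, hx, rfl⟩
  rintro - ⟨-, ⟨⟨a', p, y⟩, rfl⟩, rfl⟩
  exact ⟨⟨a', p.cons _ rfl rfl, y⟩, Q.holPath_cons_incl hQ p h (ψ a' y)⟩

theorem holEquiv_symm_mem_generatedFib {a o : K} (h : a ≤ o) {y : Q.fib o}
    (hy : y ∈ Q.generatedFib hQ ψ o) : (Q.holEquiv hQ h).symm y ∈ Q.generatedFib hQ ψ a := by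
  refine Q.generatedFib_map_le hQ ψ (Q.holEquiv hQ h).symm.toStarAlgHom ?_ ⟨y, hy, rfl⟩
  rintro - ⟨-, ⟨⟨a', p, x⟩, rfl⟩, rfl⟩
  exact ⟨⟨a', p.cons _ rfl rfl, x⟩, Q.holPath_cons_incl_inv hQ p h (ψ a' x)⟩

end Generated

end CStarNet

theorem IsEnvelope.exists_lift {N : CStarNet.{u, v} K} {NB : CStarNet.{u, max u v} K}
    {ε : ∀ o, N.fib o →⋆ₐ[ℂ] NB.fib o} (hNB : IsEnvelope N NB ε) {Q : CStarNet.{u, w} K}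
    (hQ : IsCStarNetBundle Q) {ψ : ∀ o, N.fib o →⋆ₐ[ℂ] Q.fib o} (hψ : IsNetMorphismOver N Q ψ) :
    ∃ Ψ : ∀ o, NB.fib o →⋆ₐ[ℂ] Q.fib o,
      IsNetMorphismOver NB Q Ψ ∧ ∀ o x, Ψ o (ε o x) = ψ o x := by
  let R := Q.restrict (Q.generatedFib hQ ψ) fun _ _ h _ => Q.incl_mem_generatedFib hQ ψ h
  let e o : Shrink.{max u v} (Q.generatedFib hQ ψ o) ≃⋆ₐ[ℂ] Q.generatedFib hQ ψ o :=
    Shrink.starAlgEquiv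
  have hR : IsCStarNetBundle (R.transfer _ e) :=
    R.isCStarNetBundle_transfer _ e <| Q.isCStarNetBundle_restrict _ _ hQ
      fun _ _ h _ => Q.holEquiv_symm_mem_generatedFib hQ ψ h
  have hψR := (R.isNetMorphismOver_transfer_symm _ e).comp
    (Q.isNetMorphismOver_restrict_codRestrict _ _ hψ (Q.apply_mem_generatedFib hQ ψ))
  obtain ⟨Ψ, hΨ, hΨε⟩ := (hNB.2.2 _ hR _ hψR).exists
  have hι := (Q.isNetMorphismOver_restrict_subtype _ _).comp (R.isNetMorphismOver_transfer _ e)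
  refine ⟨fun o => ((Q.generatedFib hQ ψ o).subtype.comp (e o).toStarAlgHom).comp (Ψ o),
    hι.comp hΨ, fun o x => ?_⟩
  show (e o (Ψ o (ε o x)) : Q.fib o) = ψ o x
  rw [hΨε]
  exact congrArg Subtype.val ((e o).apply_symm_apply _)

theorem IsEnvelope.eq_id {N : CStarNet.{u, v} K} {NB : CStarNet.{u, max u v} K}
    {ε : ∀ o, N.fib o →⋆ₐ[ℂ] NB.fib o} (hNB : IsEnvelope N NB ε)
    {Φ : ∀ o, NB.fib o →⋆ₐ[ℂ] NB.fib o} (hΦ : IsNetMorphismOver NB NB Φ)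
    (hΦε : ∀ o x, Φ o (ε o x) = ε o x) : Φ = fun o => StarAlgHom.id ℂ (NB.fib o) :=
  (hNB.2.2 NB hNB.1 ε hNB.2.1).unique ⟨hΦ, hΦε⟩ ⟨fun _ _ _ _ => rfl, fun _ _ => rfl⟩

theorem IsNondegenerate.of_starAlgHom {P : Type u'} [PartialOrder P] {NB : CStarNet.{u, v} K}
    {MB : CStarNet.{u', v'} P} {f : K → P} (πb : ∀ o, NB.fib o →⋆ₐ[ℂ] MB.fib (f o))
    (hMB : IsNondegenerate MB) : IsNondegenerate NB :=
  fun o => have := hMB (f o); (πb o).toRingHom.domain_nontrivial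

theorem statement_6_general {K : Type u} {P : Type u'} {S : Type u''}
    [PartialOrder K] [PartialOrder P] [PartialOrder S]
    (N : CStarNet.{u, v} K) (M : CStarNet.{u', v'} P) (L : CStarNet.{u'', v''} S)
    (NB : CStarNet.{u, max u v} K) (εN : ∀ o, N.fib o →⋆ₐ[ℂ] NB.fib o)
    (hNB : IsEnvelope N NB εN)
    (MB : CStarNet.{u', max u' v'} P) (εM : ∀ o, M.fib o →⋆ₐ[ℂ] MB.fib o)
    (hMB : IsEnvelope M MB εM)
    (LB : CStarNet.{u'', max u'' v''} S) (εL : ∀ o, L.fib o →⋆ₐ[ℂ] LB.fib o) :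
    -- (i) existence of the lifted morphism, and stability of injectivity
    (∀ (f : K →o P) (π : ∀ o, N.fib o →⋆ₐ[ℂ] M.fib (f o)), IsNetMorphism N M f π →
      (∃ πb : ∀ o, NB.fib o →⋆ₐ[ℂ] MB.fib (f o),
        IsNetMorphism NB MB f πb ∧ ∀ o x, πb o (εN o x) = εM (f o) (π o x)) ∧
      ((∀ o, Function.Injective (π o)) →
        (IsNondegenerate MB ∧ ∀ o, Function.Injective (εM o)) →
        (IsNondegenerate NB ∧ ∀ o, Function.Injective (εN o)))) ∧
    -- (ii) functoriality: identities are preserved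
    (∀ Φ : ∀ o, NB.fib o →⋆ₐ[ℂ] NB.fib o, IsNetMorphismOver NB NB Φ →
      (∀ o x, Φ o (εN o x) = εN o x) → ∀ o y, Φ o y = y) ∧
    -- (ii) functoriality: compositions are preserved
    (∀ (f : K →o P) (π : ∀ o, N.fib o →⋆ₐ[ℂ] M.fib (f o)),
      IsNetMorphism N M f π →
      ∀ (f' : P →o S) (π' : ∀ o', M.fib o' →⋆ₐ[ℂ] L.fib (f' o')),
        IsNetMorphism M L f' π' →
        ∀ (πb : ∀ o, NB.fib o →⋆ₐ[ℂ] MB.fib (f o)),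
          IsNetMorphism NB MB f πb → (∀ o x, πb o (εN o x) = εM (f o) (π o x)) →
          ∀ (πb' : ∀ o', MB.fib o' →⋆ₐ[ℂ] LB.fib (f' o')),
            IsNetMorphism MB LB f' πb' → (∀ o' x, πb' o' (εM o' x) = εL (f' o') (π' o' x)) →
            (∀ ⦃a o : K⦄ (h : a ≤ o) (x : NB.fib a),
               πb' (f o) (πb o (NB.incl h x))
                 = LB.incl (f'.monotone (f.monotone h)) (πb' (f a) (πb a x))) ∧
            (∀ (o : K) (x : N.fib o),
               πb' (f o) (πb o (εN o x)) = εL (f' (f o)) (π' (f o) (π o x)))) := by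
  refine ⟨fun f π hπ => ?_, fun Φ hΦ hΦε o y => ?_,
    fun f π _ f' π' _ πb hπb hπbε πb' hπb' hπb'ε => ⟨hπb'.comp hπb, fun o x => ?_⟩⟩
  · have hεMπ : IsNetMorphism N MB f fun o => (εM (f o)).comp (π o) :=
      (show IsNetMorphism M MB OrderHom.id εM from hMB.2.1).comp hπ
    obtain ⟨πb, hπb, hπbε⟩ :=
      hNB.exists_lift (Q := MB.comap f) (CStarNet.isCStarNetBundle_comap hMB.1 f) hεMπ
    refine ⟨⟨πb, hπb, hπbε⟩, fun hπinj ⟨hMBnd, hεMinj⟩ =>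
      ⟨.of_starAlgHom (MB := MB) πb hMBnd, fun o => ?_⟩⟩
    have hcomp : πb o ∘ εN o = εM (f o) ∘ π o := funext (hπbε o)
    exact Function.Injective.of_comp (f := πb o) (hcomp ▸ (hεMinj (f o)).comp (hπinj o))
  · rw [hNB.eq_id hΦ hΦε]
    rfl
  · rw [hπbε, hπb'ε]

/-- functoriality of the enveloping net bundle: every morphism of nets
lifts to a morphism of the enveloping net bundles compatibly with the canonical
embeddings; if the morphism is faithful on the fibres and the target net is injective
then the source net is injective; and the lifting preserves identities and
compositions. -/
theorem statement_6 {K : Type u} {P : Type u'} {S : Type u''}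
    [PartialOrder K] [PartialOrder P] [PartialOrder S]
    (hK : ∀ a b : K, Nonempty (SPath K a b)) (hP : ∀ a b : P, Nonempty (SPath P a b))
    (hS : ∀ a b : S, Nonempty (SPath S a b))
    (N : CStarNet.{u, v} K) (M : CStarNet.{u', v'} P) (L : CStarNet.{u'', v''} S)
    (NB : CStarNet.{u, max u v} K) (εN : ∀ o, N.fib o →⋆ₐ[ℂ] NB.fib o)
    (hNB : IsEnvelope N NB εN)
    (MB : CStarNet.{u', max u' v'} P) (εM : ∀ o, M.fib o →⋆ₐ[ℂ] MB.fib o)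
    (hMB : IsEnvelope M MB εM)
    (LB : CStarNet.{u'', max u'' v''} S) (εL : ∀ o, L.fib o →⋆ₐ[ℂ] LB.fib o)
    (hLB : IsEnvelope L LB εL) :
    -- (i) existence of the lifted morphism, and stability of injectivity
    (∀ (f : K →o P) (π : ∀ o, N.fib o →⋆ₐ[ℂ] M.fib (f o)), IsNetMorphism N M f π →
      (∃ πb : ∀ o, NB.fib o →⋆ₐ[ℂ] MB.fib (f o),
        IsNetMorphism NB MB f πb ∧ ∀ o x, πb o (εN o x) = εM (f o) (π o x)) ∧
      ((∀ o, Function.Injective (π o)) →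
        (IsNondegenerate MB ∧ ∀ o, Function.Injective (εM o)) →
        (IsNondegenerate NB ∧ ∀ o, Function.Injective (εN o)))) ∧
    -- (ii) functoriality: identities are preserved
    (∀ Φ : ∀ o, NB.fib o →⋆ₐ[ℂ] NB.fib o, IsNetMorphismOver NB NB Φ →
      (∀ o x, Φ o (εN o x) = εN o x) → ∀ o y, Φ o y = y) ∧
    -- (ii) functoriality: compositions are preserved
    (∀ (f : K →o P) (π : ∀ o, N.fib o →⋆ₐ[ℂ] M.fib (f o)),
      IsNetMorphism N M f π →
      ∀ (f' : P →o S) (π' : ∀ o', M.fib o' →⋆ₐ[ℂ] L.fib (f' o')),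
        IsNetMorphism M L f' π' →
        ∀ (πb : ∀ o, NB.fib o →⋆ₐ[ℂ] MB.fib (f o)),
          IsNetMorphism NB MB f πb → (∀ o x, πb o (εN o x) = εM (f o) (π o x)) →
          ∀ (πb' : ∀ o', MB.fib o' →⋆ₐ[ℂ] LB.fib (f' o')),
            IsNetMorphism MB LB f' πb' → (∀ o' x, πb' o' (εM o' x) = εL (f' o') (π' o' x)) →
            (∀ ⦃a o : K⦄ (h : a ≤ o) (x : NB.fib a),
               πb' (f o) (πb o (NB.incl h x))
                 = LB.incl (f'.monotone (f.monotone h)) (πb' (f a) (πb a x))) ∧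
            (∀ (o : K) (x : N.fib o),
               πb' (f o) (πb o (εN o x)) = εL (f' (f o)) (π' (f o) (π o x)))) :=
  statement_6_general N M L NB εN hNB MB εM hMB LB εL

end AQFT
end
end

section
/- Let K be a pathwise connected poset whose fundamental group π₁ᵒ(K) is amenable. Then every nondegenerate net of C*-algebras over K has a state. -/
noncomputable section

universe u v w u' v' w' u'' v'' w''

namespace AQFT

/-! ### Nets of C*-algebras over a poset -/

open scoped ComplexOrder

variable {K : Type u} [PartialOrder K]

/-!
The fibre of the enveloping bundle over `o` is a nonzero unital C*-algebra, so it carries a state: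
extend `λ1 ↦ λ` by Hahn–Banach, and note that a unital functional of norm one is positive.
Holonomy along loops makes `π₁ᵒ(K)` act on this fibre by *-automorphisms, and averaging the
bounded orbit functions `g ↦ φ(α_g x)` with an invariant mean gives a holonomy-invariant state.
Transporting it to the other fibres along paths from `o` is then independent of the path, which
gives a state of the bundle; composing with `ε` gives a state of the net.
-/

section States

variable {A : Type*} [CStarAlgebra A] [Nontrivial A]

lemma _root_.IsSelfAdjoint.norm_add_mul_I_smul_one_sq_le {a : A} (ha : IsSelfAdjoint a) (t : ℝ) :
    ‖a + (t * Complex.I) • (1 : A)‖ ^ 2 ≤ ‖a‖ ^ 2 + t ^ 2 := by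
  have hstar : star (a + (t * Complex.I) • (1 : A)) = a - (t * Complex.I) • 1 := by
    simp [ha.star_eq, sub_eq_add_neg, Complex.conj_ofReal]
  have hmul : star (a + (t * Complex.I) • (1 : A)) * (a + (t * Complex.I) • 1)
      = a * a + ((t : ℂ) ^ 2) • 1 := by
    have hI : (t * Complex.I) * (t * Complex.I) = -((t : ℂ) ^ 2) := by ring_nf; simp
    rw [hstar, sub_mul, mul_add, mul_add, smul_mul_assoc, smul_mul_assoc, mul_smul_comm,
      mul_smul_comm, smul_smul, hI, one_mul, mul_one, mul_one]
    module
  calc ‖a + (t * Complex.I) • (1 : A)‖ ^ 2 = ‖a * a + ((t : ℂ) ^ 2) • (1 : A)‖ := by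
        rw [sq, ← CStarRing.norm_star_mul_self, hmul]
    _ ≤ ‖a * a‖ + ‖((t : ℂ) ^ 2) • (1 : A)‖ := norm_add_le _ _
    _ ≤ ‖a‖ ^ 2 + t ^ 2 := by
        gcongr
        · exact (norm_mul_le a a).trans_eq (sq _).symm
        · simp [norm_smul]

lemma im_apply_eq_zero_of_norm_le (f : A →ₗ[ℂ] ℂ) (hf : ∀ a, ‖f a‖ ≤ ‖a‖) (hf1 : f 1 = 1)
    {a : A} (ha : IsSelfAdjoint a) : (f a).im = 0 := by
  have key (t : ℝ) : 2 * t * (f a).im ≤ ‖a‖ ^ 2 := by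
    have h := pow_le_pow_left₀ (norm_nonneg _) (hf (a + (t * Complex.I) • 1)) 2
    rw [map_add, map_smul, hf1, smul_eq_mul, mul_one, Complex.sq_norm,
      Complex.normSq_apply] at h
    simp only [Complex.add_re, Complex.add_im, Complex.mul_re, Complex.mul_im,
      Complex.ofReal_re, Complex.ofReal_im, Complex.I_re, Complex.I_im] at h
    nlinarith [ha.norm_add_mul_I_smul_one_sq_le t, sq_nonneg (f a).re, sq_nonneg (f a).im]
  by_contra h
  have := key ((‖a‖ ^ 2 + 1) / (2 * (f a).im))
  field_simp at this
  linarith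

lemma apply_star_mul_self_nonneg_of_norm_le (f : A →ₗ[ℂ] ℂ) (hf : ∀ a, ‖f a‖ ≤ ‖a‖)
    (hf1 : f 1 = 1) (b : A) : 0 ≤ f (star b * b) := by
  set a := star b * b
  have ha : IsSelfAdjoint a := .star_mul_self b
  let _ : PartialOrder A := CStarAlgebra.spectralOrder A
  have _ : StarOrderedRing A := CStarAlgebra.spectralOrderedRing A
  have hcompl : ‖algebraMap ℝ A ‖a‖ - a‖ ≤ ‖a‖ := by
    calc ‖algebraMap ℝ A ‖a‖ - a‖ ≤ ‖algebraMap ℝ A ‖a‖‖ :=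
          CStarAlgebra.norm_le_norm_of_nonneg_of_le (sub_nonneg.mpr ha.le_algebraMap_norm_self)
            (sub_le_self _ (star_mul_self_nonneg b))
      _ = ‖a‖ := by simp
  have hf_compl : f (algebraMap ℝ A ‖a‖ - a) = ‖a‖ - f a := by
    rw [map_sub, Algebra.algebraMap_eq_smul_one, ← Complex.coe_smul, map_smul, hf1]
    simp
  have hre : |‖a‖ - (f a).re| ≤ ‖a‖ := by
    simpa [hf_compl] using (Complex.abs_re_le_norm _).trans ((hf _).trans hcompl)
  rw [Complex.nonneg_iff]
  exact ⟨by linarith [(abs_le.mp hre).2], (im_apply_eq_zero_of_norm_le f hf hf1 ha).symm⟩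

lemma exists_state_norm_le : ∃ φ : CStarAlgState A, ∀ a, ‖φ.lin a‖ ≤ ‖a‖ := by
  obtain ⟨g, hg, hg1⟩ := exists_dual_vector'' ℂ (1 : A)
  have hbound (a : A) : ‖g a‖ ≤ ‖a‖ :=
    (g.le_opNorm a).trans (mul_le_of_le_one_left (norm_nonneg a) hg)
  have hone : (g : A →ₗ[ℂ] ℂ) 1 = 1 := by simpa using hg1
  exact ⟨⟨g, hone, apply_star_mul_self_nonneg_of_norm_le (g : A →ₗ[ℂ] ℂ) hbound hone⟩, hbound⟩

end States

section Averaging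

variable {G : Type*} [Group G] {A : Type*} [CStarAlgebra A] (act : G →* (A ≃⋆ₐ[ℂ] A))
  (m : RightInvariantMean G) {φ : A →ₗ[ℂ] ℂ} (hφ : ∀ a, ‖φ a‖ ≤ ‖a‖)

def orbitRe : A →ₗ[ℝ] BddFuns G where
  toFun x := ⟨fun g => (φ (act g x)).re, ‖x‖, fun g =>
    ((Complex.abs_re_le_norm _).trans (hφ _)).trans_eq (StarAlgEquiv.norm_map _ x)⟩
  map_add' x y := Subtype.ext <| funext fun g => by simp
  map_smul' c x := Subtype.ext <| funext fun g => by simp [← Complex.coe_smul]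

@[simp] lemma orbitRe_apply (x : A) (g : G) :
    (orbitRe act hφ x : G → ℝ) g = (φ (act g x)).re := rfl

lemma orbitRe_act (h : G) (x : A) :
    orbitRe act hφ (act h x) = BddFuns.rtrans (orbitRe act hφ x) h :=
  Subtype.ext <| funext fun g => by simp [BddFuns.rtrans]

/-- Only real parts can be averaged by a mean on `ℓ∞(G)`; `extendRCLike` rebuilds the
complex-linear functional from the averaged real parts. -/
def averageFunctional : A →ₗ[ℂ] ℂ :=
  Module.Dual.extendRCLike (m.mean ∘ₗ orbitRe act hφ)

lemma averageFunctional_apply (x : A) :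
    averageFunctional act m hφ x = (m.mean (orbitRe act hφ x) : ℂ)
      - Complex.I * m.mean (orbitRe act hφ (Complex.I • x)) := rfl

lemma averageFunctional_act (h : G) (x : A) :
    averageFunctional act m hφ (act h x) = averageFunctional act m hφ x := by
  have hmean (y : A) : m.mean (orbitRe act hφ (act h y)) = m.mean (orbitRe act hφ y) := by
    rw [orbitRe_act, m.rightInv]
  rw [averageFunctional_apply, averageFunctional_apply, ← map_smul, hmean, hmean]

end Averaging

section InvariantState

variable {G : Type*} [Group G] {A : Type*} [CStarAlgebra A] (act : G →* (A ≃⋆ₐ[ℂ] A))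

def averageState (m : RightInvariantMean G) (φ : CStarAlgState A)
    (hφ : ∀ a, ‖φ.lin a‖ ≤ ‖a‖) : CStarAlgState A where
  lin := averageFunctional act m hφ
  map_one := by
    have hre : orbitRe act hφ 1 = BddFuns.const G 1 :=
      Subtype.ext <| funext fun g => by simp [BddFuns.const, φ.map_one]
    have him : orbitRe act hφ (Complex.I • 1) = 0 :=
      Subtype.ext <| funext fun g => by simp [φ.map_one]
    simp [averageFunctional_apply, hre, him, m.normalized]
  pos b := by
    have hpos (g : G) : 0 ≤ φ.lin (act g (star b * b)) := by
      rw [map_mul, map_star]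
      exact φ.pos _
    have him : orbitRe act hφ (Complex.I • (star b * b)) = 0 :=
      Subtype.ext <| funext fun g => by
        simp only [orbitRe_apply, map_smul, smul_eq_mul, Complex.mul_re, Complex.I_re,
          Complex.I_im, ← (Complex.nonneg_iff.mp (hpos g)).2]
        simp
    rw [averageFunctional_apply, him, map_zero, Complex.ofReal_zero, mul_zero, sub_zero,
      Complex.zero_le_real]
    exact m.nonneg _ fun g => (Complex.nonneg_iff.mp (hpos g)).1

lemma exists_invariant_state (hG : IsAmenable G) [Nontrivial A] :
    ∃ ψ : CStarAlgState A, ∀ (g : G) (x : A), ψ.lin (act g x) = ψ.lin x := by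
  obtain ⟨m⟩ := hG
  obtain ⟨φ, hφ⟩ := exists_state_norm_le (A := A)
  exact ⟨averageState act m φ hφ, averageFunctional_act act m hφ⟩

end InvariantState

namespace CStarNet

variable {N : CStarNet.{u, v} K} (hN : IsCStarNetBundle N)

lemma holPath_comp_apply {a b c : K} (p : SPath K a b) (q : SPath K b c) (x : N.fib a) :
    N.holPath hN (p.comp q) x = N.holPath hN q (N.holPath hN p x) := by
  induction q with
  | nil => rfl
  | cons q s h1 h0 ih => exact congrArg (N.fibCast h0 ∘ N.hol1 hN s ∘ N.fibCast h1.symm) ih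

lemma incl_holPath_single {a b t : K} (s : Simplex1 K) (h1 : s.d1 = a) (h0 : s.d0 = b)
    (hs : s.supp ≤ t) (ha : a ≤ t) (hb : b ≤ t) (x : N.fib a) :
    N.incl hb (N.holPath hN (.single s h1 h0) x) = N.incl ha x := by
  subst h1 h0
  -- the holonomy of a single simplex `s` unfolds to `(incl s.le0)⁻¹ ∘ incl s.le1`
  calc N.incl hb (N.holPath hN (.single s rfl rfl) x)
      = N.incl hs (N.incl s.le0 ((N.holEquiv hN s.le0).symm (N.incl s.le1 x))) :=
        (N.incl_comp _ _ _).symm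
    _ = N.incl hs (N.incl s.le1 x) :=
        congrArg (N.incl hs) ((N.holEquiv hN s.le0).apply_symm_apply (N.incl s.le1 x))
    _ = N.incl ha x := N.incl_comp _ _ _

lemma holPath_eq_of_homotopic {a b : K} {p q : SPath K a b} (h : SPath.Homotopic p q)
    (x : N.fib a) : N.holPath hN p x = N.holPath hN q x := by
  induction h with
  | refl p => rfl
  | symm _ ih => exact (ih x).symm
  | trans _ _ ih₁ ih₂ => exact (ih₁ x).trans (ih₂ x)
  | comp_congr _ _ ihp ihq => rw [holPath_comp_apply, holPath_comp_apply, ihp, ihq]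
  | degen s h0 h1 hs =>
      exact N.incl_injective hs.ge
        (incl_holPath_single hN s h1 h0 le_rfl hs.ge hs.ge x).symm
  | triangle c h1 h0 =>
      have hb : _ ≤ c.supp := h0.ge.trans (c.d0.le0.trans c.le0)
      have ha : _ ≤ c.supp := h1.ge.trans (c.d2.le1.trans c.le2)
      apply N.incl_injective hb
      rw [holPath_comp_apply, incl_holPath_single hN _ _ _ c.le0 (c.d2.le0.trans c.le2),
        incl_holPath_single hN _ _ _ c.le2 ha, incl_holPath_single hN _ _ _ c.le1 ha]

lemma holPath_reverse_apply {a b : K} (p : SPath K a b) (y : N.fib b) :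
    N.holPath hN p.reverse y = (N.holPath hN p).symm y := by
  apply EquivLike.injective (N.holPath hN p)
  rw [StarAlgEquiv.apply_symm_apply, ← holPath_comp_apply,
    holPath_eq_of_homotopic hN (SPath.reverse_comp_self p)]
  rfl

lemma holPath_nervePath_apply {a b : K} (h : a ≤ b) (x : N.fib a) :
    N.holPath hN (SPath.nervePath h) x = N.incl h x :=
  N.incl_injective le_rfl <|
    (incl_holPath_single hN ⟨b, b, a, le_rfl, h⟩ rfl rfl le_rfl h le_rfl x).trans
      (N.incl_comp h le_rfl x).symm

def holonomy (o : K) : Pi1 K o →* (N.fib o ≃⋆ₐ[ℂ] N.fib o) where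
  toFun := Quotient.lift (N.holPath hN) fun _ _ h =>
    StarAlgEquiv.ext (holPath_eq_of_homotopic hN h)
  map_one' := rfl
  map_mul' g h := Quotient.inductionOn₂ g h fun p q =>
    StarAlgEquiv.ext (holPath_comp_apply hN q p)

end CStarNet

def CStarAlgState.comp {A B : Type*} [CStarAlgebra A] [CStarAlgebra B] (ψ : CStarAlgState B)
    (f : A →⋆ₐ[ℂ] B) : CStarAlgState A where
  lin := ψ.lin ∘ₗ f.toAlgHom.toLinearMap
  map_one := by simpa using ψ.map_one
  pos a := by simpa [map_star] using ψ.pos (f a)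

@[simp] lemma CStarAlgState.comp_lin_apply {A B : Type*} [CStarAlgebra A] [CStarAlgebra B]
    (ψ : CStarAlgState B) (f : A →⋆ₐ[ℂ] B) (a : A) : (ψ.comp f).lin a = ψ.lin (f a) := rfl

def NetState.comap {N : CStarNet.{u, v} K} {M : CStarNet.{u, v'} K} (ω : NetState M)
    (φ : ∀ o, N.fib o →⋆ₐ[ℂ] M.fib o) (hφ : IsNetMorphismOver N M φ) : NetState N where
  st o := (ω.st o).comp (φ o)
  compat _ _ h x := by simpa [hφ h x] using ω.compat h (φ _ x)

def NetState.ofHolonomyInvariant {N : CStarNet.{u, v} K} (hN : IsCStarNetBundle N)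
    (hconn : ∀ a b : K, Nonempty (SPath K a b)) {o : K} (ψ : CStarAlgState (N.fib o))
    (hψ : ∀ (p : SPath K o o) (x : N.fib o), ψ.lin (N.holPath hN p x) = ψ.lin x) :
    NetState N where
  st a := ψ.comp (N.holPath hN (hconn o a).some).symm
  compat a b h x := by
    set pa := (hconn o a).some
    set pb := (hconn o b).some
    have hloop : N.holPath hN ((pa.comp (SPath.nervePath h)).comp pb.reverse)
        ((N.holPath hN pa).symm x) = (N.holPath hN pb).symm (N.incl h x) := by
      rw [N.holPath_comp_apply, N.holPath_comp_apply, StarAlgEquiv.apply_symm_apply,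
        N.holPath_nervePath_apply, N.holPath_reverse_apply]
    simp only [CStarAlgState.comp_lin_apply, StarAlgHom.coe_coe]
    rw [← hloop, hψ]

/-- if the fundamental group of the poset is amenable then every
nondegenerate net of C*-algebras over it has a state. -/
theorem statement_8 {K : Type u} [PartialOrder K]
    (hconn : ∀ a b : K, Nonempty (SPath K a b)) (o : K)
    (ham : IsAmenable (Pi1 K o))
    (N : CStarNet.{u, v} K) (NB : CStarNet.{u, max u v} K)
    (ε : ∀ o', N.fib o' →⋆ₐ[ℂ] NB.fib o') (henv : IsEnvelope N NB ε)
    (hnd : IsNondegenerate NB) :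
    Nonempty (NetState N) := by
  obtain ⟨hNB, hε, -⟩ := henv
  have := hnd o
  obtain ⟨ψ, hψ⟩ := exists_invariant_state (NB.holonomy hNB o) ham
  exact ⟨(NetState.ofHolonomyInvariant hNB hconn ψ fun p => hψ (Pi1.mk p)).comap ε hε⟩

end AQFT
end
end
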